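/- arXiv:2507.01268 — 2 statements merged into one kernel-verified Lean document; each statement's English description precedes it below -/
import Mathlib

section
/- The conjugator length function of every affine (irreducible) Coxeter group, with respect to its standard generating set, grows linearly. -/
noncomputable section

/-- Euclidean `n`-space. -/
abbrev En (n : ℕ) : Type := EuclideanSpace ℝ (Fin n)

/-- The orthogonal group of Euclidean `n`-space, realized as linear isometries. -/
abbrev OrthGrp (n : ℕ) : Type := En n ≃ₗᵢ[ℝ] En n

/-- The action of the orthogonal group on the (multiplicatively written) translation group. -/
def rotAction (n : ℕ) : OrthGrp n →* MulAut (Multiplicative (En n)) where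
  toFun A := AddEquiv.toMultiplicative A.toLinearEquiv.toAddEquiv
  map_one' := by ext x; rfl
  map_mul' A B := by ext x; rfl

/-- The isometry group `Isom(𝔼ⁿ) = T ⋊ O(n)`. -/
abbrev IsomE (n : ℕ) : Type :=
  SemidirectProduct (Multiplicative (En n)) (OrthGrp n) (rotAction n)

instance (n : ℕ) : TopologicalSpace (OrthGrp n) :=
  TopologicalSpace.induced (fun A => (A : En n → En n)) inferInstance

instance (n : ℕ) : TopologicalSpace (IsomE n) :=
  TopologicalSpace.induced (fun g => (g.left, g.right)) inferInstance

/-- The translation subgroup `T` of `Isom(𝔼ⁿ)`. -/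
def transSubgroup (n : ℕ) : Subgroup (IsomE n) := SemidirectProduct.inl.range

/-- The orthogonal subgroup `O(n)` of `Isom(𝔼ⁿ)`. -/
def sphSubgroup (n : ℕ) : Subgroup (IsomE n) := SemidirectProduct.inr.range

/-- A subgroup `H` of `Isom(𝔼ⁿ)` *splits* if `H = T_H ⋊ H₀`:
the translation part and the spherical part of every element of `H` lie in `H`. -/
def Splits {n : ℕ} (H : Subgroup (IsomE n)) : Prop :=
  ∀ h ∈ H, SemidirectProduct.inl h.left ∈ H ∧ SemidirectProduct.inr h.right ∈ H

/-- The translation vector of an isometry. -/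
def tPart {n : ℕ} (g : IsomE n) : En n := Multiplicative.toAdd g.left

/-- The lattice `L_H = {λ : t^λ ∈ T_H}` of translation vectors of `H`. -/
def latticeLH {n : ℕ} (H : Subgroup (IsomE n)) : Set (En n) :=
  {v | SemidirectProduct.inl (Multiplicative.ofAdd v) ∈ H}

/-- Word length with respect to a generating set `S` (symmetrized). -/
def wordLength {G : Type*} [Group G] (S : Set G) (g : G) : ℕ :=
  sInf {k | ∃ l : List G, (∀ x ∈ l, x ∈ S ∨ x⁻¹ ∈ S) ∧ l.prod = g ∧ l.length = k}

/-- The conjugator length of a pair of elements. -/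
def conjLength {G : Type*} [Group G] (S : Set G) (h h' : G) : ℕ :=
  sInf {m | ∃ k : G, k * h * k⁻¹ = h' ∧ wordLength S k = m}

/-- The conjugator length function. -/
def CLF {G : Type*} [Group G] (S : Set G) (m : ℕ) : ℕ :=
  sSup {l | ∃ h h' : G, IsConj h h' ∧ wordLength S h + wordLength S h' ≤ m ∧
    conjLength S h h' = l}

/-- `g` quasi-dominates `f` via an increasing affine function. -/
def QuasiDom (f g : ℕ → ℕ) : Prop :=
  ∃ C D : ℕ, 0 < C ∧ ∀ m, f m ≤ C * g (C * m + D) + D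

/-- A Coxeter matrix is irreducible if its Coxeter graph is connected: there is no
nontrivial partition of the generators into two mutually commuting subsets. -/
def CoxeterMatrixIrreducible {B : Type*} (M : CoxeterMatrix B) : Prop :=
  ∀ P : Set B, (∀ i ∈ P, ∀ j ∉ P, M i j = 2) → P = ∅ ∨ P = Set.univ


/-!
Write `g ∈ W` as `t^λ w` with `λ` in the translation lattice `L` and `w ∈ W₀`. The displacement
`‖λ‖` of the origin is at most a constant times the word length of `g`.

Upper bound: if `k₀ = t^{s₀} w` conjugates `h` to `h'` and `A` is the rotation part of `h'`, then
so does `t^s w` for every `s ∈ L` with `(1 - A) s = (1 - A) s₀`. The image `(1 - A) L ⊆ L` is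
discrete, so it has a finite basis with coefficients bounded linearly by the norm; lifting the
basis to `L` gives such an `s` of length `O(‖(1 - A) s₀‖) = O(|h| + |h'|)`, uniformly over the
finitely many `A ∈ W₀`.

Lower bound: a simple reflection has a rotation part `A ≠ 1`, which moves some `v ∈ L` since `L`
spans. Every conjugator of `A` to `t^{N v} A t^{-N v}` has a translation part `x` with
`(1 - A) x = N (v - A v)`, so its length grows linearly in `N`, while the pair has length `O(N)`.
-/

section WordLength

variable {G : Type*} [Group G] {S : Set G}

theorem wordLength_prod_le {l : List G} (hl : ∀ x ∈ l, x ∈ S ∨ x⁻¹ ∈ S) :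
    wordLength S l.prod ≤ l.length :=
  Nat.sInf_le ⟨l, hl, rfl, rfl⟩

theorem exists_word_length_eq_wordLength (hS : Subgroup.closure S = ⊤) (g : G) :
    ∃ l : List G, (∀ x ∈ l, x ∈ S ∨ x⁻¹ ∈ S) ∧ l.prod = g ∧ l.length = wordLength S g := by
  have hg : g ∈ Submonoid.closure (S ∪ S⁻¹) := by
    rw [← Subgroup.closure_toSubmonoid, hS]; trivial
  obtain ⟨l, hl, hlg⟩ := Submonoid.exists_list_of_mem_closure hg
  exact Nat.sInf_mem
    (s := {k | ∃ l : List G, (∀ x ∈ l, x ∈ S ∨ x⁻¹ ∈ S) ∧ l.prod = g ∧ l.length = k})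
    ⟨l.length, l, hl, hlg, rfl⟩

theorem wordLength_one : wordLength S (1 : G) = 0 :=
  Nat.eq_zero_of_le_zero (wordLength_prod_le (l := []) (by simp))

theorem wordLength_mul_le (hS : Subgroup.closure S = ⊤) (g h : G) :
    wordLength S (g * h) ≤ wordLength S g + wordLength S h := by
  obtain ⟨l₁, hl₁, rfl, hlen₁⟩ := exists_word_length_eq_wordLength hS g
  obtain ⟨l₂, hl₂, rfl, hlen₂⟩ := exists_word_length_eq_wordLength hS h
  rw [← List.prod_append, ← hlen₁, ← hlen₂, ← List.length_append]
  exact wordLength_prod_le fun x hx => (List.mem_append.1 hx).elim (hl₁ x) (hl₂ x)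

theorem wordLength_inv_le (hS : Subgroup.closure S = ⊤) (g : G) :
    wordLength S g⁻¹ ≤ wordLength S g := by
  obtain ⟨l, hl, rfl, hlen⟩ := exists_word_length_eq_wordLength hS g
  rw [List.prod_inv_reverse, ← hlen, ← List.length_map (·⁻¹), ← List.length_reverse]
  refine wordLength_prod_le fun x hx => ?_
  obtain ⟨y, hy, rfl⟩ := List.mem_map.1 (List.mem_reverse.1 hx)
  simpa [or_comm] using hl y hy

theorem wordLength_pow_le (hS : Subgroup.closure S = ⊤) (g : G) (N : ℕ) :
    wordLength S (g ^ N) ≤ N * wordLength S g := by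
  induction N with
  | zero => simp [wordLength_one]
  | succ N ih =>
    rw [pow_succ, Nat.succ_mul]
    exact (wordLength_mul_le hS _ _).trans (Nat.add_le_add_right ih _)

theorem wordLength_zpow_le (hS : Subgroup.closure S = ⊤) (g : G) (m : ℤ) :
    wordLength S (g ^ m) ≤ m.natAbs * wordLength S g := by
  obtain ⟨N, rfl | rfl⟩ := Int.eq_nat_or_neg m
  · simpa using wordLength_pow_le hS g N
  · simpa using (wordLength_inv_le hS _).trans (wordLength_pow_le hS g N)

theorem wordLength_map_prod_zpow_le (hS : Subgroup.closure S = ⊤) {H : Type*} [CommGroup H]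
    (φ : H →* G) {ι : Type*} (t : Finset ι) (x : ι → H) (m : ι → ℤ) :
    wordLength S (φ (∏ i ∈ t, x i ^ m i)) ≤ ∑ i ∈ t, (m i).natAbs * wordLength S (φ (x i)) := by
  classical
  induction t using Finset.induction with
  | empty => simp [wordLength_one]
  | insert a t ha ih =>
    rw [Finset.prod_insert ha, Finset.sum_insert ha, map_mul, map_zpow]
    exact (wordLength_mul_le hS _ _).trans (add_le_add (wordLength_zpow_le hS _ _) ih)

theorem GroupSeminorm.le_mul_wordLength (hS : Subgroup.closure S = ⊤) (p : GroupSeminorm G)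
    {R : ℝ} (hR : ∀ s ∈ S, p s ≤ R) (g : G) : p g ≤ R * wordLength S g := by
  obtain ⟨l, hl, rfl, hlen⟩ := exists_word_length_eq_wordLength hS g
  rw [← hlen]
  clear hlen
  induction l with
  | nil => simp
  | cons x l ih =>
    have hx : p x ≤ R := (hl x List.mem_cons_self).elim (hR x) fun h => map_inv_eq_map p x ▸ hR _ h
    rw [List.prod_cons, List.length_cons, Nat.cast_succ, mul_add_one, add_comm]
    exact (map_mul_le_add p _ _).trans
      (add_le_add hx (ih fun y hy => hl y (List.mem_cons_of_mem x hy)))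

end WordLength

section ConjugatorLength

variable {G : Type*} [Group G] {S : Set G}

theorem conjLength_le_wordLength {h h' k : G} (hk : k * h * k⁻¹ = h') :
    conjLength S h h' ≤ wordLength S k :=
  Nat.sInf_le ⟨k, hk, rfl⟩

theorem exists_wordLength_eq_conjLength {h h' : G} (hc : IsConj h h') :
    ∃ k, k * h * k⁻¹ = h' ∧ wordLength S k = conjLength S h h' := by
  obtain ⟨k, hk⟩ := isConj_iff.1 hc
  exact Nat.sInf_mem (s := {m | ∃ k : G, k * h * k⁻¹ = h' ∧ wordLength S k = m}) ⟨_, k, hk, rfl⟩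

def HasLinearConjugators (S : Set G) (C D : ℕ) : Prop :=
  ∀ h h' : G, IsConj h h' →
    ∃ k, k * h * k⁻¹ = h' ∧ wordLength S k ≤ C * (wordLength S h + wordLength S h') + D

variable {C D : ℕ}

theorem conjLength_le_of_hasLinearConjugators (hCD : HasLinearConjugators S C D) {h h' : G}
    (hc : IsConj h h') : conjLength S h h' ≤ C * (wordLength S h + wordLength S h') + D :=
  let ⟨_, hk, hkC⟩ := hCD h h' hc
  (conjLength_le_wordLength hk).trans hkC

theorem CLF_le (hCD : HasLinearConjugators S C D) (m : ℕ) : CLF S m ≤ C * m + D :=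
  csSup_le' fun _ ⟨_, _, hc, hm, hl⟩ =>
    hl ▸ (conjLength_le_of_hasLinearConjugators hCD hc).trans (by gcongr)

theorem conjLength_le_CLF (hCD : HasLinearConjugators S C D) {h h' : G} {m : ℕ}
    (hc : IsConj h h') (hm : wordLength S h + wordLength S h' ≤ m) :
    conjLength S h h' ≤ CLF S m :=
  le_csSup ⟨C * m + D, fun _ ⟨_, _, hc, hm, hl⟩ =>
    hl ▸ (conjLength_le_of_hasLinearConjugators hCD hc).trans (by gcongr)⟩ ⟨h, h', hc, hm, rfl⟩

theorem CLF_mono (hCD : HasLinearConjugators S C D) : Monotone (CLF S) := fun _ _ hmm =>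
  csSup_le' fun _ ⟨_, _, hc, hm, hl⟩ => hl ▸ conjLength_le_CLF hCD hc (hm.trans hmm)

end ConjugatorLength

theorem le_ceil_mul_add_of_le {x y D : ℕ} {r : ℝ} (h : (x : ℝ) ≤ r * y + D) :
    x ≤ ⌈r⌉₊ * y + D := by
  have hr : r * y ≤ ⌈r⌉₊ * y := mul_le_mul_of_nonneg_right (Nat.le_ceil r) (Nat.cast_nonneg y)
  have hx : (x : ℝ) ≤ ⌈r⌉₊ * y + D := by linarith
  exact_mod_cast hx

theorem quasiDom_id_of_le_affine {f : ℕ → ℕ} {C D : ℕ} (hf : ∀ m, f m ≤ C * m + D) :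
    QuasiDom f fun m => m :=
  ⟨C + 1, D, C.succ_pos, fun m => (hf m).trans <| Nat.add_le_add_right
    (Nat.mul_le_mul C.le_succ (Nat.le_add_right_of_le (Nat.le_mul_of_pos_left m C.succ_pos))) D⟩

theorem quasiDom_id_of_le_mul_comp_affine {g : ℕ → ℕ} (hg : Monotone g) {a c : ℕ}
    (h : ∀ m, m ≤ c * g (a * m + a)) : QuasiDom (fun m => m) g := by
  refine ⟨a + c + 1, a, by omega, fun m => (h m).trans ?_⟩
  calc c * g (a * m + a) ≤ (a + c + 1) * g ((a + c + 1) * m + a) := by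
        gcongr
        · omega
        · exact hg (by gcongr; omega)
    _ ≤ _ := Nat.le_add_right _ _

section Isometries

open SemidirectProduct Multiplicative

variable {n : ℕ}

@[simp]
theorem tPart_mul (g h : IsomE n) : tPart (g * h) = tPart g + g.right (tPart h) := by
  simp [tPart, SemidirectProduct.mul_left, rotAction]

@[simp]
theorem tPart_inl (v : En n) : tPart (inl (ofAdd v) : IsomE n) = v := rfl

@[simp]
theorem tPart_inr (A : OrthGrp n) : tPart (inr A : IsomE n) = 0 := rfl

@[simp]
theorem tPart_one : tPart (1 : IsomE n) = 0 := rfl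

theorem tPart_inv (g : IsomE n) : tPart g⁻¹ = -g.right⁻¹ (tPart g) := by
  have h := tPart_mul g⁻¹ g
  rw [inv_mul_cancel, inv_right, tPart_one] at h
  exact eq_neg_of_add_eq_zero_left h.symm

theorem ext_tPart {g h : IsomE n} (ht : tPart g = tPart h) (hr : g.right = h.right) : g = h :=
  SemidirectProduct.ext (toAdd.injective ht) hr

theorem tPart_conj (k g : IsomE n) :
    tPart (k * g * k⁻¹) = tPart k + k.right (tPart g) - (k * g * k⁻¹).right (tPart k) := by
  simp only [tPart_mul, tPart_inv, mul_right, inv_right, LinearIsometryEquiv.coe_mul,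
    Function.comp_apply, map_neg]
  abel

theorem conj_eq_conj_of_right_eq {k k₀ g : IsomE n} (hr : k.right = k₀.right)
    (ht : tPart k - (k₀ * g * k₀⁻¹).right (tPart k) = tPart k₀ - (k₀ * g * k₀⁻¹).right (tPart k₀)) :
    k * g * k⁻¹ = k₀ * g * k₀⁻¹ := by
  have hconj : (k * g * k⁻¹).right = (k₀ * g * k₀⁻¹).right := by simp [hr]
  refine ext_tPart ?_ hconj
  rw [tPart_conj, tPart_conj, hconj, hr]
  linear_combination (norm := abel) ht

theorem tPart_sub_apply_eq_of_conj_inr_eq {k k' : IsomE n} {A : OrthGrp n}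
    (h : k * inr A * k⁻¹ = k' * inr A * k'⁻¹) :
    tPart k - (k' * inr A * k'⁻¹).right (tPart k) =
      tPart k' - (k' * inr A * k'⁻¹).right (tPart k') := by
  have hk := tPart_conj k (inr A)
  rw [h, tPart_conj, tPart_inr, map_zero, add_zero, map_zero, add_zero] at hk
  exact hk.symm

theorem norm_sub_apply_le_of_conj_inr {k : IsomE n} {A : OrthGrp n} {u : En n}
    (h : k * inr A * k⁻¹ = inl (ofAdd u) * inr A * (inl (ofAdd u))⁻¹) :
    ‖u - A u‖ ≤ 2 * ‖tPart k‖ := by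
  have hk := tPart_sub_apply_eq_of_conj_inr_eq h
  simp only [mul_right, inv_right, right_inl, right_inr, one_mul, inv_one, mul_one,
    tPart_inl] at hk
  calc ‖u - A u‖ = ‖tPart k - A (tPart k)‖ := by rw [hk]
    _ ≤ ‖tPart k‖ + ‖A (tPart k)‖ := norm_sub_le _ _
    _ = 2 * ‖tPart k‖ := by rw [LinearIsometryEquiv.norm_map, two_mul]

theorem norm_tPart_sub_le_of_conj {k g g' : IsomE n} (h : k * g * k⁻¹ = g') :
    ‖tPart k - g'.right (tPart k)‖ ≤ ‖tPart g‖ + ‖tPart g'‖ := by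
  have ht := tPart_conj k g
  rw [h] at ht
  rw [show tPart k - g'.right (tPart k) = tPart g' - k.right (tPart g) by rw [ht]; abel]
  exact (norm_sub_le _ _).trans_eq (by rw [LinearIsometryEquiv.norm_map, add_comm])

theorem right_ne_one_of_mul_self_eq_one {g : IsomE n} (hg : g * g = 1) (hg1 : g ≠ 1) :
    g.right ≠ 1 := by
  intro hr
  refine hg1 (ext_tPart ?_ hr)
  have h := congrArg tPart hg
  rw [tPart_mul, hr, tPart_one] at h
  have h2 : (2 : ℝ) • tPart g = 0 := by rw [two_smul]; exact h
  exact (smul_eq_zero.1 h2).resolve_left two_ne_zero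

def translationSeminorm (n : ℕ) : GroupSeminorm (IsomE n) where
  toFun g := ‖tPart g‖
  map_one' := norm_zero
  mul_le' g h := by
    simpa only [tPart_mul, LinearIsometryEquiv.norm_map] using
      norm_add_le (tPart g) (g.right (tPart h))
  inv' g := by simp [tPart_inv]

end Isometries

section TranslationLattice

open SemidirectProduct Multiplicative

variable {n : ℕ} {W : Subgroup (IsomE n)}

/-- `latticeLH W` as a `ℤ`-submodule. -/
def translationLattice (W : Subgroup (IsomE n)) : Submodule ℤ (En n) :=
  AddSubgroup.toIntSubmodule (Subgroup.toAddSubgroup' (W.comap inl))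

theorem mem_translationLattice {v : En n} :
    v ∈ translationLattice W ↔ (inl (ofAdd v) : IsomE n) ∈ W :=
  Iff.rfl

theorem tPart_mem_translationLattice (hsplit : Splits W) {g : IsomE n} (hg : g ∈ W) :
    tPart g ∈ translationLattice W :=
  (hsplit g hg).1

theorem apply_mem_translationLattice {A : OrthGrp n} (hA : (inr A : IsomE n) ∈ W) {v : En n}
    (hv : v ∈ translationLattice W) : A v ∈ translationLattice W := by
  rw [mem_translationLattice, show ofAdd (A v) = rotAction n A (ofAdd v) from rfl, inl_aut]
  exact mul_mem (mul_mem hA hv) (by simpa only [map_inv] using inv_mem hA)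

theorem discreteTopology_translationLattice [DiscreteTopology W] :
    DiscreteTopology (translationLattice W) := by
  refine DiscreteTopology.of_continuous_injective
    (f := fun v : translationLattice W => (⟨inl (ofAdd (v : En n)), v.2⟩ : W)) ?_ ?_
  · refine Continuous.subtype_mk (continuous_induced_rng.2 ?_) _
    exact continuous_subtype_val.prodMk continuous_const
  · intro v w hvw
    exact Subtype.ext (toAdd.injective (congrArg (fun g : W => tPart (g : IsomE n)) hvw))

def translationHom (W : Subgroup (IsomE n)) : Multiplicative (translationLattice W) →* W :=
  (inl.comp (AddMonoidHom.toMultiplicative (translationLattice W).subtype.toAddMonoidHom))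
    |>.codRestrict W fun v => (toAdd v).2

@[simp]
theorem coe_translationHom (v : translationLattice W) :
    (translationHom W (ofAdd v) : IsomE n) = inl (ofAdd (v : En n)) :=
  rfl

theorem exists_mem_translationLattice_apply_ne (hspan : Submodule.span ℝ (latticeLH W) = ⊤)
    {A : OrthGrp n} (hA : A ≠ 1) : ∃ v ∈ translationLattice W, A v ≠ v := by
  by_contra! hfix
  refine hA (LinearIsometryEquiv.toLinearEquiv_injective (LinearEquiv.toLinearMap_injective ?_))
  exact LinearMap.ext_on hspan hfix

end TranslationLattice

section DiscreteSubmodule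

open Submodule

variable {E : Type*} [NormedAddCommGroup E] [NormedSpace ℝ E] [FiniteDimensional ℝ E]

theorem Submodule.exists_fin_family_sum_abs_coeff_le (Λ : Submodule ℤ E) [DiscreteTopology Λ] :
    ∃ (k : ℕ) (b : Fin k → Λ) (C : ℝ), 0 ≤ C ∧ ∀ c : Λ,
      ∃ m : Fin k → ℤ, ∑ i, m i • b i = c ∧ ∑ i, |(m i : ℝ)| ≤ C * ‖(c : E)‖ := by
  -- `Λ` need not span `E`, but it is a full lattice in its real span `V`.
  set V := span ℝ (Λ : Set E)
  set Λ₀ : Submodule ℤ V := Λ.comap (V.subtype.restrictScalars ℤ)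
  have : DiscreteTopology Λ₀ :=
    DiscreteTopology.preimage_of_continuous_injective (Λ : Set E) continuous_subtype_val
      Subtype.val_injective
  have : IsZLattice ℝ Λ₀ := ⟨span_span_coe_preimage⟩
  set k := Fintype.card (Module.Free.ChooseBasisIndex ℤ Λ₀)
  set b := (Module.Free.chooseBasis ℤ Λ₀).reindex (Fintype.equivFin _)
  set e : V →L[ℝ] (Fin k → ℝ) :=
    LinearMap.toContinuousLinearMap (b.ofZLatticeBasis ℝ Λ₀).equivFun.toLinearMap
  refine ⟨_, fun i => ⟨b i, (b i).2⟩, k * ‖e‖, by positivity, fun c => ?_⟩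
  set c₀ : Λ₀ := ⟨⟨c, subset_span c.2⟩, c.2⟩
  refine ⟨b.repr c₀, ?_, ?_⟩
  · ext1
    have h := congrArg (fun x : Λ₀ => ((x : V) : E)) (b.sum_repr c₀)
    push_cast at h ⊢
    exact h
  · have hm : ∀ i, |(b.repr c₀ i : ℝ)| ≤ ‖e‖ * ‖(c : E)‖ := fun i =>
      calc |(b.repr c₀ i : ℝ)| = ‖e c₀ i‖ := by simp [e, Real.norm_eq_abs]
        _ ≤ ‖e c₀‖ := norm_le_pi_norm _ i
        _ ≤ ‖e‖ * ‖(c : E)‖ := e.le_opNorm _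
    calc ∑ i, |(b.repr c₀ i : ℝ)| ≤ ∑ _i, ‖e‖ * ‖(c : E)‖ := Finset.sum_le_sum fun i _ => hm i
      _ = _ := by rw [Finset.sum_const, Finset.card_univ, Fintype.card_fin, nsmul_eq_mul, mul_assoc]

theorem Submodule.exists_fin_family_map_sum_eq {F : Type*} [AddCommGroup F] [Module ℝ F]
    (L : Submodule ℤ F) (f : F →ₗ[ℝ] E) [DiscreteTopology (L.map (f.restrictScalars ℤ))] :
    ∃ (k : ℕ) (p : Fin k → L) (C : ℝ), 0 ≤ C ∧ ∀ x : L,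
      ∃ m : Fin k → ℤ, f ↑(∑ i, m i • p i) = f x ∧ ∑ i, |(m i : ℝ)| ≤ C * ‖f x‖ := by
  obtain ⟨k, b, C, hC, hb⟩ := (L.map (f.restrictScalars ℤ)).exists_fin_family_sum_abs_coeff_le
  choose p hpL hp using fun i => mem_map.1 (b i).2
  refine ⟨k, fun i => ⟨p i, hpL i⟩, C, hC, fun x => ?_⟩
  obtain ⟨m, hmb, hmC⟩ := hb ⟨f x, mem_map_of_mem x.2⟩
  refine ⟨m, ?_, hmC⟩
  have h := congrArg Subtype.val hmb
  push_cast at h ⊢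
  simpa only [map_sum, map_zsmul, ← hp, LinearMap.restrictScalars_apply] using h

end DiscreteSubmodule

section UpperBound

open SemidirectProduct Multiplicative

variable {n : ℕ} {W : Subgroup (IsomE n)} {S : Set W}

theorem exists_norm_tPart_le_mul_wordLength (hS : Subgroup.closure S = ⊤) (hSfin : S.Finite) :
    ∃ R : ℝ, ∀ g : W, ‖tPart (g : IsomE n)‖ ≤ R * wordLength S g := by
  obtain ⟨R, hR⟩ := (hSfin.image fun s : W => ‖tPart (s : IsomE n)‖).bddAbove
  exact ⟨R, ((translationSeminorm n).comp W.subtype).le_mul_wordLength hS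
    fun s hs => hR (Set.mem_image_of_mem _ hs)⟩

theorem exists_short_translation [DiscreteTopology W] (hS : Subgroup.closure S = ⊤)
    {A : OrthGrp n} (hA : (inr A : IsomE n) ∈ W) :
    ∃ C : ℝ, 0 ≤ C ∧ ∀ s₀ : translationLattice W, ∃ s : translationLattice W,
      (s : En n) - A s = s₀ - A s₀ ∧
        (wordLength S (translationHom W (ofAdd s)) : ℝ) ≤ C * ‖(s₀ : En n) - A s₀‖ := by
  let f : En n →ₗ[ℝ] En n := LinearMap.id - A.toLinearEquiv.toLinearMap
  have : DiscreteTopology ((translationLattice W).map (f.restrictScalars ℤ)) := by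
    refine DiscreteTopology.of_subset (discreteTopology_translationLattice (W := W)) ?_
    rintro _ ⟨v, hv, rfl⟩
    exact sub_mem hv (apply_mem_translationLattice hA hv)
  obtain ⟨k, p, C, hC, hp⟩ := (translationLattice W).exists_fin_family_map_sum_eq f
  obtain ⟨M, hM⟩ := Finite.exists_le fun i => wordLength S (translationHom W (ofAdd (p i)))
  refine ⟨C * M, by positivity, fun s₀ => ?_⟩
  obtain ⟨m, hfm, hmC⟩ := hp s₀
  refine ⟨∑ i, m i • p i, hfm, ?_⟩
  have hwl := wordLength_map_prod_zpow_le hS (translationHom W) Finset.univ (fun i => ofAdd (p i)) m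
  simp only [← ofAdd_zsmul, ← ofAdd_sum] at hwl
  calc (wordLength S (translationHom W (ofAdd (∑ i, m i • p i))) : ℝ)
      ≤ ∑ i, |(m i : ℝ)| * M := by
        refine (Nat.cast_le.2 hwl).trans ?_
        push_cast [Nat.cast_natAbs, Int.cast_abs]
        gcongr with i
        exact_mod_cast hM i
    _ = (∑ i, |(m i : ℝ)|) * M := (Finset.sum_mul _ _ _).symm
    _ ≤ C * ‖f s₀‖ * M := by gcongr
    _ = C * M * ‖(s₀ : En n) - A s₀‖ := mul_right_comm _ _ _

def sphericalPart (W : Subgroup (IsomE n)) : Set (OrthGrp n) := {A | (inr A : IsomE n) ∈ W}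

theorem finite_sphericalPart
    (hW0fin : ((W ⊓ sphSubgroup n : Subgroup (IsomE n)) : Set (IsomE n)).Finite) :
    (sphericalPart W).Finite :=
  (hW0fin.preimage inr_injective.injOn).subset fun A hA => ⟨hA, A, rfl⟩

theorem exists_uniform_short_translation [DiscreteTopology W] (hW0 : (sphericalPart W).Finite)
    (hS : Subgroup.closure S = ⊤) :
    ∃ C : ℝ, 0 ≤ C ∧ ∀ A ∈ sphericalPart W, ∀ s₀ : translationLattice W,
      ∃ s : translationLattice W, (s : En n) - A s = s₀ - A s₀ ∧
        (wordLength S (translationHom W (ofAdd s)) : ℝ) ≤ C * ‖(s₀ : En n) - A s₀‖ := by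
  have := hW0.to_subtype
  choose C hC0 hC using fun A : sphericalPart W => exists_short_translation hS A.2
  obtain ⟨C', hC'⟩ := Finite.exists_le C
  refine ⟨C', (hC0 ⟨1, by simp [sphericalPart]⟩).trans (hC' _), fun A hA s₀ => ?_⟩
  obtain ⟨s, hs, hwl⟩ := hC ⟨A, hA⟩ s₀
  exact ⟨s, hs, hwl.trans (by gcongr; exact hC' _)⟩

theorem exists_wordLength_inr_le (hW0 : (sphericalPart W).Finite) :
    ∃ D : ℕ, ∀ A (hA : A ∈ sphericalPart W), wordLength S ⟨inr A, hA⟩ ≤ D := by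
  have := hW0.to_subtype
  obtain ⟨D, hD⟩ := Finite.exists_le fun A : sphericalPart W => wordLength S ⟨inr A.1, A.2⟩
  exact ⟨D, fun A hA => hD ⟨A, hA⟩⟩

theorem exists_hasLinearConjugators (hsplit : Splits W) [DiscreteTopology W]
    (hW0 : (sphericalPart W).Finite) (hS : Subgroup.closure S = ⊤) (hSfin : S.Finite) :
    ∃ C D : ℕ, HasLinearConjugators S C D := by
  obtain ⟨R, hR⟩ := exists_norm_tPart_le_mul_wordLength hS hSfin
  obtain ⟨C, hC0, hC⟩ := exists_uniform_short_translation hW0 hS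
  obtain ⟨D, hD⟩ := exists_wordLength_inr_le (S := S) hW0
  refine ⟨⌈C * R⌉₊, D, fun h h' hc => ?_⟩
  obtain ⟨k₀, hk₀⟩ := isConj_iff.1 hc
  have hk₀E : (k₀ : IsomE n) * h * (k₀ : IsomE n)⁻¹ = h' := congrArg Subtype.val hk₀
  set A := (h' : IsomE n).right
  set w := (k₀ : IsomE n).right
  obtain ⟨s, hs, hwl⟩ := hC A (hsplit _ h'.2).2 ⟨_, tPart_mem_translationLattice hsplit k₀.2⟩
  refine ⟨translationHom W (ofAdd s) * ⟨inr w, (hsplit _ k₀.2).2⟩, Subtype.ext ?_, ?_⟩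
  · rw [← hk₀E]
    push_cast
    refine conj_eq_conj_of_right_eq (by simp [w]) ?_
    rw [hk₀E]
    simpa using hs
  · have hnorm : ‖tPart (k₀ : IsomE n) - A (tPart (k₀ : IsomE n))‖ ≤
        R * (wordLength S h + wordLength S h') :=
      (norm_tPart_sub_le_of_conj hk₀E).trans (by rw [mul_add]; exact add_le_add (hR h) (hR h'))
    have hk : (wordLength S (translationHom W (ofAdd s) * ⟨inr w, (hsplit _ k₀.2).2⟩) : ℝ) ≤
        C * R * (wordLength S h + wordLength S h') + D :=
      calc _ ≤ (wordLength S (translationHom W (ofAdd s)) : ℝ) + D := by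
            exact_mod_cast (wordLength_mul_le hS _ _).trans (Nat.add_le_add_left (hD _ _) _)
        _ ≤ C * (R * (wordLength S h + wordLength S h')) + D := by
            gcongr
            exact hwl.trans (mul_le_mul_of_nonneg_left hnorm hC0)
        _ = _ := by ring
    exact le_ceil_mul_add_of_le (by exact_mod_cast hk)

end UpperBound

section LowerBound

open SemidirectProduct Multiplicative

variable {n : ℕ} {W : Subgroup (IsomE n)} {S : Set W}

theorem exists_conj_pairs_le_mul_conjLength (hS : Subgroup.closure S = ⊤) (hSfin : S.Finite)
    {A : OrthGrp n} (hA : (inr A : IsomE n) ∈ W) {v : En n} (hv : v ∈ translationLattice W)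
    (hAv : A v ≠ v) :
    ∃ a c : ℕ, ∀ N : ℕ, ∃ h h' : W, IsConj h h' ∧
      wordLength S h + wordLength S h' ≤ a * N + a ∧ N ≤ c * conjLength S h h' := by
  obtain ⟨R, hR⟩ := exists_norm_tPart_le_mul_wordLength hS hSfin
  have hδ : 0 < ‖v - A v‖ := norm_pos_iff.2 (sub_ne_zero.2 hAv.symm)
  set h : W := ⟨inr A, hA⟩
  set t : W := translationHom W (ofAdd ⟨v, hv⟩)
  refine ⟨2 * wordLength S t + 2 * wordLength S h, ⌈2 * R / ‖v - A v‖⌉₊, fun N =>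
    ⟨h, t ^ N * h * (t ^ N)⁻¹, isConj_iff.2 ⟨_, rfl⟩, ?_, ?_⟩⟩
  · calc wordLength S h + wordLength S (t ^ N * h * (t ^ N)⁻¹)
        ≤ wordLength S h + (wordLength S (t ^ N) + wordLength S h + wordLength S (t ^ N)) := by
          gcongr
          exact (wordLength_mul_le hS _ _).trans
            (add_le_add (wordLength_mul_le hS _ _) (wordLength_inv_le hS _))
      _ ≤ wordLength S h + (N * wordLength S t + wordLength S h + N * wordLength S t) := by
          gcongr <;> exact wordLength_pow_le hS t N
      _ ≤ _ := by nlinarith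
  · obtain ⟨k, hk, hkl⟩ := exists_wordLength_eq_conjLength (S := S) (isConj_iff.2 ⟨t ^ N, rfl⟩)
    rw [← hkl]
    have htN : t ^ N = translationHom W (ofAdd (N • ⟨v, hv⟩)) := by rw [ofAdd_nsmul, map_pow]
    rw [htN] at hk
    have hN : (N : ℝ) * ‖v - A v‖ ≤ 2 * R * wordLength S k := by
      have hk' := norm_sub_apply_le_of_conj_inr (u := N • v) (congrArg Subtype.val hk)
      rw [map_nsmul, ← smul_sub, RCLike.norm_nsmul ℝ, nsmul_eq_mul] at hk'
      linarith [hR k]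
    refine le_ceil_mul_add_of_le (D := 0) ?_
    rw [Nat.cast_zero, add_zero, div_mul_eq_mul_div, le_div_iff₀ hδ]
    exact hN

theorem exists_inr_mem_ne_one (hsplit : Splits W) [Nontrivial W] {B : Type*}
    {M : CoxeterMatrix B} (cs : CoxeterSystem M W) :
    ∃ A : OrthGrp n, (inr A : IsomE n) ∈ W ∧ A ≠ 1 := by
  obtain ⟨g, hg⟩ := exists_ne (1 : W)
  obtain ⟨ω, rfl⟩ := cs.wordProd_surjective g
  cases ω with
  | nil => exact absurd cs.wordProd_nil hg
  | cons i _ =>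
    have hi : cs.simple i ≠ 1 := fun h => by simpa [h] using cs.length_simple i
    refine ⟨(cs.simple i : IsomE n).right, (hsplit _ (cs.simple i).2).2,
      right_ne_one_of_mul_self_eq_one ?_ fun h => hi (Subtype.ext h)⟩
    exact congrArg Subtype.val (cs.simple_mul_simple_self i)

end LowerBound

theorem conjugator_length_of_affine_coxeter_linear_general (n : ℕ)
    (W : Subgroup (IsomE n)) (hsplit : Splits W)
    (hdisc : DiscreteTopology ↥W) (hinf : Infinite ↥W)
    (hspan : Submodule.span ℝ (latticeLH W) = ⊤)
    (hW0fin : ((W ⊓ sphSubgroup n : Subgroup (IsomE n)) : Set (IsomE n)).Finite)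
    (B : Type) (hBfin : Finite B) (M : CoxeterMatrix B)
    (cs : CoxeterSystem M ↥W) :
    QuasiDom (CLF (Set.range cs.simple)) (fun m => m) ∧
      QuasiDom (fun m => m) (CLF (Set.range cs.simple)) := by
  have hS := cs.subgroup_closure_range_simple
  have hSfin := Set.finite_range cs.simple
  obtain ⟨C, D, hCD⟩ := exists_hasLinearConjugators hsplit (finite_sphericalPart hW0fin) hS hSfin
  refine ⟨quasiDom_id_of_le_affine (CLF_le hCD), ?_⟩
  obtain ⟨A, hA, hA1⟩ := exists_inr_mem_ne_one hsplit cs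
  obtain ⟨v, hv, hAv⟩ := exists_mem_translationLattice_apply_ne hspan hA1
  obtain ⟨a, c, hac⟩ := exists_conj_pairs_le_mul_conjLength hS hSfin hA hv hAv
  refine quasiDom_id_of_le_mul_comp_affine (CLF_mono hCD) (a := a) (c := c) fun N => ?_
  obtain ⟨h, h', hc, hlen, hN⟩ := hac N
  exact hN.trans (Nat.mul_le_mul_left c (conjLength_le_CLF hCD hc hlen))

/-- **The conjugator length function of every affine (irreducible) Coxeter group, with
respect to its standard generating set, grows linearly.**
An affine Coxeter group is realized as an infinite discrete split subgroup
`W = T_W ⋊ W₀` of `Isom(𝔼ⁿ)`, where the translation lattice spans `𝔼ⁿ` (translations by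
the coroot lattice) and the spherical part `W₀` is finite, together with an (irreducible)
Coxeter system whose simple reflections form the standard generating set.  "Grows
linearly" means the function is bounded above and below by increasing affine functions,
up to quasi-equivalence. -/
theorem conjugator_length_of_affine_coxeter_linear (n : ℕ)
    (W : Subgroup (IsomE n)) (hsplit : Splits W)
    (hdisc : DiscreteTopology ↥W) (hinf : Infinite ↥W)
    (hspan : Submodule.span ℝ (latticeLH W) = ⊤)
    (hW0fin : ((W ⊓ sphSubgroup n : Subgroup (IsomE n)) : Set (IsomE n)).Finite)
    (B : Type) (hBfin : Finite B) (M : CoxeterMatrix B)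
    (hirr : CoxeterMatrixIrreducible M)
    (cs : CoxeterSystem M ↥W) :
    QuasiDom (CLF (Set.range cs.simple)) (fun m => m) ∧
      QuasiDom (fun m => m) (CLF (Set.range cs.simple)) :=
  conjugator_length_of_affine_coxeter_linear_general n W hsplit hdisc hinf hspan hW0fin B hBfin M cs
end
end

section
/- Let H be a split, locally compact subgroup of G = T ⋊ O(n) = Isom(𝔼ⁿ). Then H is compactly generated, i.e. H = ⟨S⟩ for some compact subset S ⊆ H. -/
noncomputable section

/-!
A locally compact subspace of a Hausdorff space is locally closed, and a locally closed subgroup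
of a topological group is closed. Hence the translation lattice `L_H` is closed in `ℝⁿ`, and
`H₀ = H ∩ O(n)` is closed in `O(n)`, which is a compact group because its pointwise topology is
the norm topology of the unitary operators on `ℝⁿ`. A closed subgroup `A` of `ℝⁿ` is generated
by a compact set: if `b ⊆ A` is a basis of `span A`, every element of `A` is an integer
combination of `b` plus an element of `A` in the parallelepiped spanned by `b`. As `H` splits,
it is generated by its translations and `H₀`.
-/

open Topology Set

theorem isLocallyClosed_of_weaklyLocallyCompactSpace {X : Type*} [TopologicalSpace X] [T2Space X]
    {s : Set X} [WeaklyLocallyCompactSpace s] : IsLocallyClosed s := by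
  refine ((isLocallyClosed_tfae s).out 0 3).mpr fun x hx => ?_
  obtain ⟨C, hC, hCx⟩ := exists_compact_mem_nhds (⟨x, hx⟩ : s)
  obtain ⟨t, ht, htC⟩ := (mem_nhds_subtype s _ C).mp hCx
  obtain ⟨U, hUt, hU, hxU⟩ := mem_nhds_iff.mp ht
  have hUC : U ∩ s ⊆ Subtype.val '' C := fun y hy => ⟨⟨y, hy.2⟩, htC (hUt hy.1), rfl⟩
  refine ⟨U, hxU, hU, ?_⟩
  calc U ∩ closure s ⊆ closure (U ∩ s) := hU.inter_closure
    _ ⊆ Subtype.val '' C :=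
      ((hC.image continuous_subtype_val).isClosed.closure_subset_iff).mpr hUC
    _ ⊆ s := image_subset_iff.mpr fun y _ => y.2

@[to_additive]
theorem Subgroup.isClosed_of_isLocallyClosed {G : Type*} [Group G] [TopologicalSpace G]
    [IsTopologicalGroup G] {H : Subgroup G} (hH : IsLocallyClosed (H : Set G)) :
    IsClosed (H : Set G) := by
  obtain ⟨U, Z, hU, hZ, hHUZ⟩ := hH
  refine isClosed_of_closure_subset fun x hx => ?_
  have hxU : (fun y => y⁻¹ * x) ⁻¹' U ∈ 𝓝 x := by
    refine (continuous_inv.mul continuous_const).continuousAt.preimage_mem_nhds (hU.mem_nhds ?_)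
    simpa using (hHUZ.subset H.one_mem).1
  obtain ⟨h, hhU, hhH⟩ := mem_closure_iff_nhds.mp hx _ hxU
  -- `closure H` is a subgroup contained in `Z`, so `h⁻¹ * x ∈ U ∩ Z = H`
  have hZx : h⁻¹ * x ∈ Z := by
    refine closure_minimal (hHUZ ▸ inter_subset_right) hZ ?_
    exact H.topologicalClosure.mul_mem (H.le_topologicalClosure (H.inv_mem hhH)) hx
  have : h⁻¹ * x ∈ H := by rw [← SetLike.mem_coe, hHUZ]; exact ⟨hhU, hZx⟩
  simpa using H.mul_mem hhH this

theorem AddSubgroup.exists_isCompact_closure_eq {V : Type*} [AddCommGroup V] [Module ℝ V]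
    [TopologicalSpace V] [ContinuousAdd V] [ContinuousSMul ℝ V] [FiniteDimensional ℝ V]
    {A : AddSubgroup V} (hA : IsClosed (A : Set V)) :
    ∃ K : Set V, IsCompact K ∧ AddSubgroup.closure K = A := by
  obtain ⟨b, hbA, hspan, hli⟩ := exists_linearIndependent ℝ (A : Set V)
  have : Fintype b := @Fintype.ofFinite _ hli.finite
  set P : Set V := (fun c : b → ℝ => ∑ i, c i • (i : V)) '' univ.pi fun _ => Icc 0 1
  have hP : IsCompact P := (isCompact_univ_pi fun _ => isCompact_Icc).image (by fun_prop)
  set K : Set V := ((A : Set V) ∩ P) ∪ b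
  refine ⟨K, (hP.inter_left hA).union (toFinite b).isCompact, le_antisymm ?_ ?_⟩
  · exact (AddSubgroup.closure_le _).mpr (union_subset inter_subset_left hbA)
  intro a ha
  have : a ∈ Submodule.span ℝ (range ((↑) : b → V)) := by
    rw [Subtype.range_coe, hspan]; exact Submodule.subset_span ha
  obtain ⟨c, rfl⟩ := (Submodule.mem_span_range_iff_exists_fun ℝ).mp this
  set z : V := ∑ i, ⌊c i⌋ • (i : V)
  have hz : z ∈ AddSubgroup.closure K :=
    sum_mem fun i _ => zsmul_mem (AddSubgroup.subset_closure (subset_union_right i.2)) _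
  have hdecomp : ∑ i, c i • (i : V) = z + ∑ i, Int.fract (c i) • (i : V) := by
    simp only [z, ← Int.cast_smul_eq_zsmul ℝ, ← Finset.sum_add_distrib, ← add_smul,
      Int.floor_add_fract]
  have hfract : ∑ i, Int.fract (c i) • (i : V) ∈ (A : Set V) ∩ P := by
    refine ⟨?_, ⟨_, fun i _ => ⟨Int.fract_nonneg _, (Int.fract_lt_one _).le⟩, rfl⟩⟩
    rw [eq_sub_of_add_eq' hdecomp.symm]
    exact A.sub_mem ha (A.sum_mem fun i _ => A.zsmul_mem (hbA i.2) _)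
  rw [hdecomp]
  exact AddSubgroup.add_mem _ hz (AddSubgroup.subset_closure (subset_union_left hfract))

theorem SemidirectProduct.closure_image_inl_union_image_inr {N G : Type*} [Group N] [Group G]
    {φ : G →* MulAut N} {H : Subgroup (N ⋊[φ] G)}
    (hH : ∀ h ∈ H, inl h.left ∈ H ∧ inr h.right ∈ H) {s : Set N} {t : Set G}
    (hs : Subgroup.closure s = H.comap inl) (ht : Subgroup.closure t = H.comap inr) :
    Subgroup.closure (inl '' s ∪ inr '' t) = H := by
  refine le_antisymm ((Subgroup.closure_le _).mpr ?_) fun h hh => ?_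
  · rintro _ (⟨x, hx, rfl⟩ | ⟨y, hy, rfl⟩)
    · exact (hs ▸ Subgroup.subset_closure hx : x ∈ H.comap inl)
    · exact (ht ▸ Subgroup.subset_closure hy : y ∈ H.comap inr)
  rw [← inl_left_mul_inr_right h]
  refine mul_mem (Subgroup.closure_mono subset_union_left ?_)
    (Subgroup.closure_mono subset_union_right ?_)
  · rw [← MonoidHom.map_closure, hs]
    exact ⟨_, (hH h hh).1, rfl⟩
  · rw [← MonoidHom.map_closure, ht]
    exact ⟨_, (hH h hh).2, rfl⟩

theorem Subgroup.exists_isCompact_closure_eq_top_of_closure_eq {G : Type*} [Group G]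
    [TopologicalSpace G] {T : Set G} (hT : IsCompact T) {H : Subgroup G}
    (hTH : Subgroup.closure T = H) :
    ∃ S : Set H, IsCompact S ∧ Subgroup.closure S = ⊤ := by
  subst hTH
  refine ⟨_, ?_, Subgroup.closure_closure_coe_preimage⟩
  rwa [IsInducing.subtypeVal.isCompact_preimage_iff (by simp [Subgroup.subset_closure])]

instance {V : Type*} [NormedAddCommGroup V] [InnerProductSpace ℝ V] [FiniteDimensional ℝ V] :
    CompactSpace (unitary (V →L[ℝ] V)) := by
  refine isCompact_iff_compactSpace.mp (Metric.isCompact_of_isClosed_isBounded isClosed_unitary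
    ((Metric.isBounded_closedBall (x := 0) (r := 1)).subset fun u hu => ?_))
  rw [mem_closedBall_zero_iff]
  exact ContinuousLinearMap.opNorm_le_bound _ zero_le_one fun x => by
    rw [Unitary.norm_map ⟨u, hu⟩, one_mul]

def unitaryHomeomorphOrthGrp (n : ℕ) : unitary (En n →L[ℝ] En n) ≃ₜ OrthGrp n where
  toEquiv := Unitary.linearIsometryEquiv.toEquiv
  continuous_toFun := continuous_induced_rng.mpr <| continuous_pi fun _ =>
    continuous_subtype_val.clm_apply continuous_const
  continuous_invFun := Continuous.subtype_mk (continuous_clm_apply.mpr fun x =>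
    (continuous_apply x).comp continuous_induced_dom) _

section
variable {n : ℕ}

-- Instance search misses `NormedStarGroup.to_continuousStar` for operators on `EuclideanSpace`.
instance : ContinuousStar (En n →L[ℝ] En n) := ⟨ContinuousLinearMap.adjoint.continuous⟩

instance : IsTopologicalGroup (OrthGrp n) :=
  (unitaryHomeomorphOrthGrp n).symm.isInducing.topologicalGroup
    (Unitary.linearIsometryEquiv (H := En n)).symm

instance : CompactSpace (OrthGrp n) := (unitaryHomeomorphOrthGrp n).compactSpace

instance : T2Space (OrthGrp n) := (unitaryHomeomorphOrthGrp n).symm.isEmbedding.t2Space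

instance : T2Space (IsomE n) :=
  IsEmbedding.t2Space ⟨⟨rfl⟩, fun _ _ hgh =>
    SemidirectProduct.ext (congrArg Prod.fst hgh) (congrArg Prod.snd hgh)⟩

theorem IsomE.continuous_inl :
    Continuous (SemidirectProduct.inl : Multiplicative (En n) → IsomE n) :=
  continuous_induced_rng.mpr (continuous_id.prodMk continuous_const)

theorem IsomE.continuous_inr : Continuous (SemidirectProduct.inr : OrthGrp n → IsomE n) :=
  continuous_induced_rng.mpr (continuous_const.prodMk continuous_id)

end

/-- **A split, locally compact subgroup of `Isom(𝔼ⁿ)` is compactly generated**: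
`H = ⟨S⟩` for some compact subset `S ⊆ H`. -/
theorem split_locally_compact_is_compactly_generated (n : ℕ) (H : Subgroup (IsomE n))
    (hsplit : Splits H) (hlc : LocallyCompactSpace ↥H) :
    ∃ S : Set ↥H, IsCompact S ∧ Subgroup.closure S = ⊤ := by
  have hH : IsLocallyClosed (H : Set (IsomE n)) := isLocallyClosed_of_weaklyLocallyCompactSpace
  set A := (H.comap SemidirectProduct.inl).toAddSubgroup'
  set B := H.comap SemidirectProduct.inr
  have hA : IsClosed (A : Set (En n)) := AddSubgroup.isClosed_of_isLocallyClosed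
    (hH.preimage (IsomE.continuous_inl.comp continuous_ofAdd))
  have hB : IsClosed (B : Set (OrthGrp n)) :=
    Subgroup.isClosed_of_isLocallyClosed (hH.preimage IsomE.continuous_inr)
  obtain ⟨K, hK, hKA⟩ := AddSubgroup.exists_isCompact_closure_eq hA
  have hKH : Subgroup.closure (Multiplicative.ofAdd '' K) = H.comap SemidirectProduct.inl :=
    Subgroup.toAddSubgroup'.injective <| by
      rwa [Subgroup.toAddSubgroup'_closure, Multiplicative.ofAdd.preimage_image]
  refine Subgroup.exists_isCompact_closure_eq_top_of_closure_eq ?_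
    (SemidirectProduct.closure_image_inl_union_image_inr hsplit hKH B.closure_eq)
  exact ((hK.image continuous_ofAdd).image IsomE.continuous_inl).union
    (hB.isCompact.image IsomE.continuous_inr)
end
end
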